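/- Let 𝔾=(𝕍,𝔼) be an infinite connected locally finite graph which is amenable and vertex quasi-transitive, and let {V_N} be a Følner sequence with V_N ↗ 𝕍. Then the limit lim_{N→∞} |𝔼|_{V_N}| / |V_N| exists, is finite and nonzero, and does not depend on the choice of the Følner sequence; moreover, if O_1,…,O_k are the vertex orbits of the automorphism group of 𝔾, Δ_i is the common degree of the vertices in O_i, and α_i = lim_{N→∞} |O_i ∩ V_N|/|V_N|, then the limit equals (1/2)(α_1Δ_1 + ⋯ + α_kΔ_k). -/
import Mathlib


open scoped Classical

namespace RCM

variable {V : Type*}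

/-- The set of edges of the graph `G` with both endpoints in the finite vertex set `W`
(denoted `𝔼|_W` in the paper). -/
noncomputable def edgesIn (G : SimpleGraph V) (W : Finset V) : Finset (Sym2 V) :=
  ((W ×ˢ W).image fun p => s(p.1, p.2)).filter (· ∈ G.edgeSet)

/-- The edge boundary `∂_e W`: edges of `G` with exactly one endpoint in `W`. -/
def edgeBoundary (G : SimpleGraph V) (W : Finset V) : Set (Sym2 V) :=
  {e | ∃ x y, e = s(x, y) ∧ G.Adj x y ∧ x ∈ W ∧ y ∉ W}

/-- `V_N ↗ 𝕍`: each `V_N` is (finite and) connected, the sequence is increasing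
and exhausts the vertex set. -/
def MonoExhaust (G : SimpleGraph V) (VN : ℕ → Finset V) : Prop :=
  (∀ N, (G.induce (↑(VN N) : Set V)).Connected) ∧ (∀ N, VN N ⊆ VN (N + 1)) ∧
    (⋃ N, (↑(VN N) : Set V)) = Set.univ

/-- `G` is amenable: the infimum of `|∂_e W|/|W|` over finite nonempty `W ⊆ 𝕍` is zero. -/
def Amenable (G : SimpleGraph V) : Prop :=
  ∀ ε : ℝ, 0 < ε → ∃ W : Finset V, W.Nonempty ∧
    ((edgeBoundary G W).ncard : ℝ) < ε * W.card

/-- `{V_N}` is a Følner sequence: `|∂_e V_N|/|V_N| → 0`. -/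
def Folner (G : SimpleGraph V) (VN : ℕ → Finset V) : Prop :=
  Filter.Tendsto (fun N => ((edgeBoundary G (VN N)).ncard : ℝ) / (VN N).card)
    Filter.atTop (nhds 0)

/-- `G` is vertex quasi-transitive: the automorphism group of `G` has finitely many orbits
on the vertex set. -/
def VertexQuasiTransitive (G : SimpleGraph V) : Prop :=
  ∃ s : Finset V, ∀ x : V, ∃ y ∈ s, ∃ φ : G ≃g G, φ y = x

end RCM


open Filter Finset

noncomputable section
namespace EPV

variable {V : Type*} (G : SimpleGraph V)

/-- Orbit equivalence: `x ≈ y` iff some automorphism maps `x` to `y`. -/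
def sd : Setoid V :=
  ⟨fun x y => ∃ φ : G ≃g G, φ x = y,
   ⟨fun _ => ⟨SimpleGraph.Iso.refl, rfl⟩,
    fun ⟨φ, h⟩ => ⟨φ.symm, by simp [← h]⟩,
    fun ⟨φ, h⟩ ⟨ψ, h'⟩ => ⟨φ.trans ψ, by simp [← h', ← h]⟩⟩⟩

abbrev Q := Quotient (sd G)

def cls (x : V) : Q G := Quotient.mk (sd G) x

lemma cls_eq_iff {x y : V} : cls G x = cls G y ↔ ∃ φ : G ≃g G, φ x = y :=
  ⟨fun h => Quotient.exact h, fun h => Quotient.sound h⟩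

lemma cls_iso (φ : G ≃g G) (x : V) : cls G (φ x) = cls G x :=
  Quotient.sound ⟨φ.symm, by simp⟩

lemma cls_out (q : Q G) : cls G q.out = q := Quotient.out_eq q

variable (hlf : ∀ v : V, (G.neighborSet v).Finite)

def nbr (x : V) : Finset V := (hlf x).toFinset

lemma mem_nbr {x y : V} : y ∈ nbr G hlf x ↔ G.Adj x y := by
  simp [nbr]

def deg (x : V) : ℕ := (nbr G hlf x).card

lemma deg_eq_ncard (x : V) : deg G hlf x = (G.neighborSet x).ncard :=
  (Set.ncard_eq_toFinset_card _ (hlf x)).symm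

def nd (x : V) (q : Q G) : ℕ := ((nbr G hlf x).filter (fun y => cls G y = q)).card

lemma nd_iso (φ : G ≃g G) (x : V) (q : Q G) : nd G hlf (φ x) q = nd G hlf x q := by
  apply Finset.card_bij' (i := fun y _ => φ.symm y) (j := fun y _ => φ y)
  · intro a ha
    simp only [mem_filter, mem_nbr] at ha ⊢
    constructor
    · have := ha.1
      rwa [show a = φ (φ.symm a) from (φ.apply_symm_apply a).symm, φ.map_adj_iff] at this
    · rw [cls_iso G φ.symm a]; exact ha.2
  · intro a ha
    simp only [mem_filter, mem_nbr] at ha ⊢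
    exact ⟨φ.map_adj_iff.2 ha.1, by rw [cls_iso G φ a]; exact ha.2⟩
  · intro a _; simp
  · intro a _; simp

lemma nd_cls_eq {x x' : V} (h : cls G x = cls G x') (q : Q G) :
    nd G hlf x q = nd G hlf x' q := by
  obtain ⟨φ, hφ⟩ := (cls_eq_iff G).1 h
  rw [← hφ, nd_iso]

def dd (p q : Q G) : ℕ := nd G hlf p.out q

lemma nd_eq_dd (x : V) (q : Q G) : nd G hlf x q = dd G hlf (cls G x) q :=
  nd_cls_eq G hlf (by rw [cls_out]) q

lemma deg_iso (φ : G ≃g G) (x : V) : deg G hlf (φ x) = deg G hlf x := by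
  apply Finset.card_bij' (i := fun y _ => φ.symm y) (j := fun y _ => φ y)
  · intro a ha
    rw [mem_nbr] at ha ⊢
    rwa [show a = φ (φ.symm a) from (φ.apply_symm_apply a).symm, φ.map_adj_iff] at ha
  · intro a ha
    rw [mem_nbr] at ha ⊢
    exact φ.map_adj_iff.2 ha
  · intro a _; simp
  · intro a _; simp

def dq (p : Q G) : ℕ := deg G hlf p.out

lemma deg_eq_dq (x : V) : deg G hlf x = dq G hlf (cls G x) := by
  have h : cls G x = cls G ((cls G x).out) := by rw [cls_out]
  obtain ⟨φ, hφ⟩ := (cls_eq_iff G).1 h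
  rw [dq, ← hφ, deg_iso]

lemma sum_nd [Fintype (Q G)] (x : V) : ∑ q : Q G, nd G hlf x q = deg G hlf x :=
  (Finset.card_eq_sum_card_fiberwise (f := cls G) (s := nbr G hlf x)
    (t := Finset.univ) (fun _ _ => Finset.mem_univ _)).symm

def Wc (W : Finset V) (q : Q G) : Finset V := W.filter (fun y => cls G y = q)

lemma sum_Wc [Fintype (Q G)] (W : Finset V) : ∑ q : Q G, (Wc G W q).card = W.card :=
  (Finset.card_eq_sum_card_fiberwise (f := cls G) (s := W)
    (t := Finset.univ) (fun _ _ => Finset.mem_univ _)).symm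

/-- Number of (oriented) boundary pairs. -/
def bd (W : Finset V) : ℕ := ∑ x ∈ W, ((nbr G hlf x).filter (· ∉ W)).card

lemma bd_eq (W : Finset V) : (RCM.edgeBoundary G W).ncard = bd G hlf W := by
  classical
  set T : Finset ((_ : V) × V) := W.sigma (fun x => (nbr G hlf x).filter (· ∉ W)) with hT
  have hmemT : ∀ z : (_ : V) × V, z ∈ T ↔ z.1 ∈ W ∧ G.Adj z.1 z.2 ∧ z.2 ∉ W := by
    intro z; simp [hT, Finset.mem_sigma, mem_nbr, and_assoc]
  have h1 : T.card = bd G hlf W := Finset.card_sigma _ _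
  have hinj : Set.InjOn (fun z : (_ : V) × V => s(z.1, z.2)) ↑T := by
    rintro ⟨a1, a2⟩ ha ⟨b1, b2⟩ hb hab
    rw [Finset.mem_coe, hmemT] at ha hb
    simp only at hab
    rw [Sym2.eq_iff] at hab
    rcases hab with ⟨h1, h2⟩ | ⟨h1, h2⟩
    · simp [h1, h2]
    · exact absurd (h1 ▸ ha.1) hb.2.2
  have h2 : (T.image (fun z : (_ : V) × V => s(z.1, z.2))).card = T.card :=
    Finset.card_image_of_injOn hinj
  have h3 : RCM.edgeBoundary G W = ↑(T.image (fun z : (_ : V) × V => s(z.1, z.2))) := by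
    ext e
    simp only [RCM.edgeBoundary, Set.mem_setOf_eq, Finset.coe_image, Set.mem_image,
      Finset.mem_coe]
    constructor
    · rintro ⟨x, y, rfl, ha, hx, hy⟩
      exact ⟨⟨x, y⟩, (hmemT _).2 ⟨hx, ha, hy⟩, rfl⟩
    · rintro ⟨⟨x, y⟩, hz, rfl⟩
      rw [hmemT] at hz
      exact ⟨x, y, rfl, hz.2.1, hz.1, hz.2.2⟩
  rw [h3, Set.ncard_coe_finset, h2, h1]


lemma filter_nbr_card (W : Finset V) (x : V) :
    ((nbr G hlf x).filter (· ∈ W)).card = (W.filter (G.Adj x)).card := by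
  congr 1
  ext y
  simp only [mem_filter, mem_nbr]
  tauto

lemma pair_count (W : Finset V) :
    ∑ x ∈ W, (W.filter (G.Adj x)).card
      = ((W ×ˢ W).filter (fun z : V × V => G.Adj z.1 z.2)).card := by
  rw [Finset.card_filter, Finset.sum_product]
  simp only [Finset.card_filter]

lemma pair_count_eq_twice (W : Finset V) :
    ((W ×ˢ W).filter (fun z : V × V => G.Adj z.1 z.2)).card
      = 2 * (RCM.edgesIn G W).card := by
  classical
  set P := (W ×ˢ W).filter (fun z : V × V => G.Adj z.1 z.2) with hP
  have hmemP : ∀ z : V × V, z ∈ P ↔ z.1 ∈ W ∧ z.2 ∈ W ∧ G.Adj z.1 z.2 := by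
    intro z; simp [hP, Finset.mem_product, and_assoc]
  have hmap : ∀ z ∈ P, s(z.1, z.2) ∈ RCM.edgesIn G W := by
    intro z hz
    rw [hmemP] at hz
    rw [RCM.edgesIn, Finset.mem_filter]
    constructor
    · exact Finset.mem_image.2 ⟨z, Finset.mem_product.2 ⟨hz.1, hz.2.1⟩, rfl⟩
    · exact hz.2.2
  rw [Finset.card_eq_sum_card_fiberwise hmap]
  rw [Finset.sum_congr rfl (g := fun _ => 2), Finset.sum_const, smul_eq_mul, mul_comm]
  intro e he
  rw [RCM.edgesIn, Finset.mem_filter] at he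
  obtain ⟨z, hz, hze⟩ := Finset.mem_image.1 he.1
  obtain ⟨a, b⟩ := z
  rw [Finset.mem_product] at hz
  have hadj : G.Adj a b := by
    rw [← SimpleGraph.mem_edgeSet, hze]; exact he.2
  have hab : a ≠ b := hadj.ne
  have hfib : P.filter (fun z : V × V => s(z.1, z.2) = e) = {(a, b), (b, a)} := by
    ext ⟨z1, z2⟩
    simp only [Finset.mem_filter, Finset.mem_insert, Finset.mem_singleton, Prod.mk.injEq]
    constructor
    · rintro ⟨hzP, hze'⟩
      rw [← hze, Sym2.eq_iff] at hze'
      tauto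
    · rintro (⟨rfl, rfl⟩ | ⟨rfl, rfl⟩)
      · exact ⟨(hmemP _).2 ⟨hz.1, hz.2, hadj⟩, hze⟩
      · exact ⟨(hmemP _).2 ⟨hz.2, hz.1, hadj.symm⟩, by rw [← hze, Sym2.eq_swap]⟩
  rw [hfib, Finset.card_insert_of_notMem (by simp [hab]), Finset.card_singleton]

lemma handshake (W : Finset V) :
    ∑ x ∈ W, deg G hlf x = 2 * (RCM.edgesIn G W).card + bd G hlf W := by
  have hsplit : ∀ x, deg G hlf x
      = ((nbr G hlf x).filter (· ∈ W)).card + ((nbr G hlf x).filter (· ∉ W)).card := by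
    intro x
    exact (Finset.card_filter_add_card_filter_not (s := nbr G hlf x) (· ∈ W)).symm
  calc ∑ x ∈ W, deg G hlf x
      = ∑ x ∈ W, ((nbr G hlf x).filter (· ∈ W)).card + bd G hlf W := by
        rw [bd, ← Finset.sum_add_distrib]
        exact Finset.sum_congr rfl fun x _ => hsplit x
    _ = 2 * (RCM.edgesIn G W).card + bd G hlf W := by
        congr 1
        rw [Finset.sum_congr rfl fun x _ => filter_nbr_card G hlf W x,
          pair_count, pair_count_eq_twice]

lemma key (W : Finset V) (p q : Q G) :
    dd G hlf q p * (Wc G W q).card ≤ dd G hlf p q * (Wc G W p).card + bd G hlf W := by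
  classical
  -- inner/outer split of nd
  have hndsplit : ∀ (x : V) (r : Q G), nd G hlf x r
      = ((Wc G W r).filter (G.Adj x)).card
        + (((nbr G hlf x).filter (fun y => cls G y = r)).filter (· ∉ W)).card := by
    intro x r
    rw [nd, ← Finset.card_filter_add_card_filter_not
      (s := (nbr G hlf x).filter (fun y => cls G y = r)) (· ∈ W)]
    congr 2
    ext y
    simp only [Finset.mem_filter, mem_nbr, Wc]
    tauto
  have hsum : ∀ (r r' : Q G), ∑ x ∈ Wc G W r, nd G hlf x r' = dd G hlf r r' * (Wc G W r).card := by
    intro r r'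
    rw [Finset.sum_congr rfl (g := fun _ => dd G hlf r r'), Finset.sum_const, smul_eq_mul,
      mul_comm]
    intro x hx
    rw [nd_eq_dd]
    congr 1
    exact (Finset.mem_filter.1 hx).2
  have hsym : ∑ x ∈ Wc G W p, ((Wc G W q).filter (G.Adj x)).card
      = ∑ y ∈ Wc G W q, ((Wc G W p).filter (G.Adj y)).card := by
    simp only [Finset.card_filter]
    rw [Finset.sum_comm]
    congr 1; ext y; congr 1; ext x
    congr 1
    · exact propext ⟨fun h => h.symm, fun h => h.symm⟩
  have hout : ∀ r r', ∑ x ∈ Wc G W r,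
      (((nbr G hlf x).filter (fun y => cls G y = r')).filter (· ∉ W)).card ≤ bd G hlf W := by
    intro r r'
    refine le_trans (Finset.sum_le_sum fun x _ => ?_)
      (Finset.sum_le_sum_of_subset (Finset.filter_subset _ W))
    apply Finset.card_le_card
    rw [Finset.filter_filter]
    intro y hy
    rw [Finset.mem_filter] at hy ⊢
    exact ⟨hy.1, hy.2.2⟩
  calc dd G hlf q p * (Wc G W q).card = ∑ y ∈ Wc G W q, nd G hlf y p := (hsum q p).symm
    _ = ∑ y ∈ Wc G W q, ((Wc G W p).filter (G.Adj y)).card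
        + ∑ y ∈ Wc G W q, (((nbr G hlf y).filter (fun z => cls G z = p)).filter (· ∉ W)).card := by
        rw [← Finset.sum_add_distrib]
        exact Finset.sum_congr rfl fun y _ => hndsplit y p
    _ ≤ ∑ x ∈ Wc G W p, ((Wc G W q).filter (G.Adj x)).card + bd G hlf W := by
        rw [hsym]
        exact Nat.add_le_add le_rfl (hout q p)
    _ ≤ ∑ x ∈ Wc G W p, nd G hlf x q + bd G hlf W := by
        refine Nat.add_le_add ?_ le_rfl
        refine Finset.sum_le_sum fun x _ => ?_
        rw [hndsplit x q]
        exact Nat.le_add_right _ _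
    _ = dd G hlf p q * (Wc G W p).card + bd G hlf W := by rw [hsum p q]


/-- Frequency vector of a finite set. -/
def vec (W : Finset V) : Q G → ℝ := fun q => ((Wc G W q).card : ℝ) / W.card

/-- Boundary ratio. -/
def bdr (W : Finset V) : ℝ := (bd G hlf W : ℝ) / W.card

lemma vec_mem (W : Finset V) (q : Q G) : vec G W q ∈ Set.Icc (0:ℝ) 1 := by
  constructor
  · rw [vec]; positivity
  · rw [vec]
    rcases Nat.eq_zero_or_pos W.card with h | h
    · simp [h]
    · rw [div_le_one (by exact_mod_cast h)]
      exact_mod_cast Finset.card_le_card (Finset.filter_subset _ _)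

lemma sum_vec [Fintype (Q G)] (W : Finset V) (hW : W.Nonempty) :
    ∑ q : Q G, vec G W q = 1 := by
  have hc : (0:ℝ) < W.card := by exact_mod_cast Finset.card_pos.2 hW
  simp only [vec]
  rw [← Finset.sum_div]
  rw [← Nat.cast_sum, sum_Wc, div_self (ne_of_gt hc)]

lemma key_abs (W : Finset V) (hW : W.Nonempty) (p q : Q G) :
    |(dd G hlf p q : ℝ) * vec G W p - (dd G hlf q p : ℝ) * vec G W q| ≤ bdr G hlf W := by
  have hc : (0:ℝ) < W.card := by exact_mod_cast Finset.card_pos.2 hW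
  have h1 : (dd G hlf q p * (Wc G W q).card : ℝ)
      ≤ dd G hlf p q * (Wc G W p).card + bd G hlf W := by exact_mod_cast key G hlf W p q
  have h2 : (dd G hlf p q * (Wc G W p).card : ℝ)
      ≤ dd G hlf q p * (Wc G W q).card + bd G hlf W := by exact_mod_cast key G hlf W q p
  rw [vec, vec, bdr, abs_le]
  constructor
  · rw [← mul_div_assoc, ← mul_div_assoc, div_sub_div_same, ← neg_div]
    exact (div_le_div_iff_of_pos_right hc).2 (by linarith)
  · rw [← mul_div_assoc, ← mul_div_assoc, div_sub_div_same]
    exact (div_le_div_iff_of_pos_right hc).2 (by linarith)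

/-- A solution of the orbit-frequency constraint system. -/
def IsSol [Fintype (Q G)] (f : Q G → ℝ) : Prop :=
  (∀ q, 0 ≤ f q) ∧ (∑ q : Q G, f q = 1) ∧
    ∀ p q, (dd G hlf p q : ℝ) * f p = (dd G hlf q p : ℝ) * f q

lemma exists_sol_subseq [Fintype (Q G)] (W : ℕ → Finset V) (hne : ∀ n, (W n).Nonempty)
    (hb : Tendsto (fun n => bdr G hlf (W n)) atTop (nhds 0)) :
    ∃ f : Q G → ℝ, IsSol G hlf f ∧ ∃ ms : ℕ → ℕ, StrictMono ms ∧
      Tendsto (fun n => vec G (W (ms n))) atTop (nhds f) := by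
  have hcomp : IsCompact (Set.univ.pi (fun _ : Q G => Set.Icc (0:ℝ) 1)) :=
    isCompact_univ_pi fun _ => isCompact_Icc
  have hmem : ∀ n, vec G (W n) ∈ Set.univ.pi (fun _ : Q G => Set.Icc (0:ℝ) 1) :=
    fun n => fun q _ => vec_mem G (W n) q
  obtain ⟨f, hfmem, ms, hms, htend⟩ := hcomp.tendsto_subseq hmem
  have hcompw : ∀ q, Tendsto (fun n => vec G (W (ms n)) q) atTop (nhds (f q)) :=
    fun q => tendsto_pi_nhds.1 htend q
  refine ⟨f, ⟨?_, ?_, ?_⟩, ms, hms, htend⟩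
  · exact fun q => (hfmem q (Set.mem_univ q)).1
  · have h1 : Tendsto (fun n => ∑ q : Q G, vec G (W (ms n)) q) atTop
        (nhds (∑ q : Q G, f q)) := tendsto_finset_sum _ fun q _ => hcompw q
    have h2 : (fun n => ∑ q : Q G, vec G (W (ms n)) q) = fun _ => (1:ℝ) := by
      funext n; exact sum_vec G (W (ms n)) (hne _)
    rw [h2] at h1
    exact (tendsto_nhds_unique tendsto_const_nhds h1).symm
  · intro p q
    have h1 : Tendsto (fun n => (dd G hlf p q : ℝ) * vec G (W (ms n)) p
        - (dd G hlf q p : ℝ) * vec G (W (ms n)) q) atTop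
        (nhds ((dd G hlf p q : ℝ) * f p - (dd G hlf q p : ℝ) * f q)) :=
      ((hcompw p).const_mul _).sub ((hcompw q).const_mul _)
    have h0 : Tendsto (fun n => (dd G hlf p q : ℝ) * vec G (W (ms n)) p
        - (dd G hlf q p : ℝ) * vec G (W (ms n)) q) atTop (nhds 0) := by
      apply squeeze_zero_norm (fun n => key_abs G hlf (W (ms n)) (hne _) p q)
      exact hb.comp (hms.tendsto_atTop)
    have := tendsto_nhds_unique h1 h0
    linarith [this]

lemma dd_pos_of_adj {x y : V} (h : G.Adj x y) : 0 < dd G hlf (cls G x) (cls G y) := by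
  rw [← nd_eq_dd]
  apply Finset.card_pos.2
  exact ⟨y, Finset.mem_filter.2 ⟨(mem_nbr G hlf).2 h, rfl⟩⟩

lemma sol_pos (hconn : G.Connected) [Fintype (Q G)] (f : Q G → ℝ) (hf : IsSol G hlf f)
    (q : Q G) : 0 < f q := by
  have step : ∀ x y : V, G.Adj x y → 0 < f (cls G x) → 0 < f (cls G y) := by
    intro x y hxy hx
    have hc := hf.2.2 (cls G x) (cls G y)
    have hd : (0:ℝ) < (dd G hlf (cls G x) (cls G y) : ℝ) := by
      exact_mod_cast dd_pos_of_adj G hlf hxy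
    have h1 : (0:ℝ) < (dd G hlf (cls G y) (cls G x) : ℝ) * f (cls G y) := by
      rw [← hc]; exact mul_pos hd hx
    by_contra hle
    push_neg at hle
    have : (dd G hlf (cls G y) (cls G x) : ℝ) * f (cls G y) ≤ 0 :=
      mul_nonpos_of_nonneg_of_nonpos (Nat.cast_nonneg _) hle
    linarith
  have walkstep : ∀ (x y : V), G.Walk x y → 0 < f (cls G x) → 0 < f (cls G y) := by
    intro x y w
    induction w with
    | nil => exact id
    | cons h _ ih => exact fun hx => ih (step _ _ h hx)
  have hbase : ∃ q0 : Q G, 0 < f q0 := by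
    by_contra hall
    push_neg at hall
    have : ∑ q : Q G, f q ≤ 0 := Finset.sum_nonpos fun q _ => hall q
    rw [hf.2.1] at this; linarith
  obtain ⟨q0, hq0⟩ := hbase
  have hq0' : 0 < f (cls G q0.out) := by rwa [cls_out]
  have hreach := hconn.preconnected q0.out q.out
  obtain ⟨w⟩ := hreach
  have := walkstep _ _ w hq0'
  rwa [cls_out] at this

lemma sol_unique (hconn : G.Connected) [Fintype (Q G)] (f g : Q G → ℝ)
    (hf : IsSol G hlf f) (hg : IsSol G hlf g) : f = g := by
  have hfp := sol_pos G hlf hconn f hf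
  have hgp := sol_pos G hlf hconn g hg
  have step : ∀ x y : V, G.Adj x y →
      f (cls G x) * g (cls G y) = g (cls G x) * f (cls G y) := by
    intro x y hxy
    have hcf := hf.2.2 (cls G x) (cls G y)
    have hcg := hg.2.2 (cls G x) (cls G y)
    have hd : (0:ℝ) < (dd G hlf (cls G x) (cls G y) : ℝ) := by
      exact_mod_cast dd_pos_of_adj G hlf hxy
    apply mul_left_cancel₀ (ne_of_gt hd)
    calc (dd G hlf (cls G x) (cls G y) : ℝ) * (f (cls G x) * g (cls G y))
        = ((dd G hlf (cls G x) (cls G y) : ℝ) * f (cls G x)) * g (cls G y) := by ring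
      _ = ((dd G hlf (cls G y) (cls G x) : ℝ) * f (cls G y)) * g (cls G y) := by rw [hcf]
      _ = ((dd G hlf (cls G y) (cls G x) : ℝ) * g (cls G y)) * f (cls G y) := by ring
      _ = ((dd G hlf (cls G x) (cls G y) : ℝ) * g (cls G x)) * f (cls G y) := by rw [hcg]
      _ = (dd G hlf (cls G x) (cls G y) : ℝ) * (g (cls G x) * f (cls G y)) := by ring
  have walkstep : ∀ (x y : V), G.Walk x y →
      f (cls G x) * g (cls G y) = g (cls G x) * f (cls G y) := by
    intro x y w
    induction w with
    | nil => ring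
    | @cons a b c h w ih =>
        have h1 := step a b h
        have hb : 0 < f (cls G b) * g (cls G b) := mul_pos (hfp _) (hgp _)
        apply mul_left_cancel₀ (ne_of_gt hb)
        linear_combination (f (cls G b) * g (cls G c)) * h1
          + (g (cls G a) * f (cls G b)) * ih
  have hall : ∀ p q : Q G, f p * g q = g p * f q := by
    intro p q
    obtain ⟨w⟩ := hconn.preconnected p.out q.out
    have := walkstep _ _ w
    rwa [cls_out, cls_out] at this
  funext p
  have : f p * (∑ q : Q G, g q) = g p * (∑ q : Q G, f q) := by
    rw [Finset.mul_sum, Finset.mul_sum]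
    exact Finset.sum_congr rfl fun q _ => hall p q
  rwa [hf.2.1, hg.2.1, mul_one, mul_one] at this

lemma freq_tendsto (hconn : G.Connected) [Fintype (Q G)] (f : Q G → ℝ)
    (hf : IsSol G hlf f) (W : ℕ → Finset V) (hne : ∀ n, (W n).Nonempty)
    (hb : Tendsto (fun n => bdr G hlf (W n)) atTop (nhds 0)) :
    Tendsto (fun n => vec G (W n)) atTop (nhds f) := by
  apply tendsto_of_subseq_tendsto
  intro ns hns
  obtain ⟨g, hg, ms, _, ht⟩ := exists_sol_subseq G hlf (W ∘ ns) (fun n => hne _) (hb.comp hns)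
  rw [sol_unique G hlf hconn g f hg hf] at ht
  exact ⟨ms, ht⟩

lemma sum_deg_fiber [Fintype (Q G)] (W : Finset V) :
    ∑ x ∈ W, deg G hlf x = ∑ q : Q G, dq G hlf q * (Wc G W q).card := by
  rw [← Finset.sum_fiberwise W (cls G) (deg G hlf)]
  refine Finset.sum_congr rfl fun q _ => ?_
  rw [Wc, Finset.sum_congr rfl (g := fun _ => dq G hlf q), Finset.sum_const, smul_eq_mul,
    mul_comm]
  intro x hx
  rw [deg_eq_dq]
  congr 1
  exact (Finset.mem_filter.1 hx).2

lemma edges_ratio [Fintype (Q G)] (W : Finset V) (hW : W.Nonempty) :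
    ((RCM.edgesIn G W).card : ℝ) / W.card
      = (1/2) * ((∑ q : Q G, (dq G hlf q : ℝ) * vec G W q) - bdr G hlf W) := by
  have hc : (0:ℝ) < W.card := by exact_mod_cast Finset.card_pos.2 hW
  have hh : ((∑ x ∈ W, deg G hlf x : ℕ) : ℝ)
      = 2 * (RCM.edgesIn G W).card + bd G hlf W := by exact_mod_cast handshake G hlf W
  have hs : ((∑ x ∈ W, deg G hlf x : ℕ) : ℝ)
      = ∑ q : Q G, (dq G hlf q : ℝ) * ((Wc G W q).card : ℝ) := by
    rw [sum_deg_fiber]; push_cast; ring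
  have hv : ∑ q : Q G, (dq G hlf q : ℝ) * vec G W q
      = (∑ q : Q G, (dq G hlf q : ℝ) * ((Wc G W q).card : ℝ)) / W.card := by
    rw [Finset.sum_div]
    exact Finset.sum_congr rfl fun q _ => by rw [vec, mul_div_assoc]
  rw [hs] at hh
  rw [hv, bdr, hh, ← sub_div]
  ring


lemma edges_ratio' (W : Finset V) (hW : W.Nonempty) :
    ((RCM.edgesIn G W).card : ℝ) / W.card
      = (1/2) * (((∑ x ∈ W, deg G hlf x : ℕ) : ℝ) / W.card - bdr G hlf W) := by
  have hh : ((∑ x ∈ W, deg G hlf x : ℕ) : ℝ)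
      = 2 * (RCM.edgesIn G W).card + bd G hlf W := by exact_mod_cast handshake G hlf W
  rw [bdr, hh, ← sub_div]
  ring

end EPV
end

open Filter in
/-- On an amenable vertex quasi-transitive infinite connected locally finite
graph, `|𝔼|_{V_N}|/|V_N|` converges along every Følner sequence `V_N ↗ 𝕍` to a finite nonzero
limit independent of the sequence; moreover, if `O 0, …, O (k-1)` are the (pairwise distinct)
vertex orbits of the automorphism group, `D i` the common degree on `O i`, and
`α i = lim |O i ∩ V_N|/|V_N|`, then the limit equals `(1/2) Σ_i α i * D i`. -/
theorem edges_per_vertex_limit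
    {V : Type*} [Countable V] [Infinite V] (G : SimpleGraph V) (hconn : G.Connected)
    (hlf : ∀ v : V, (G.neighborSet v).Finite)
    (hamen : RCM.Amenable G) (hqt : RCM.VertexQuasiTransitive G) :
    ∃ L : ℝ, 0 < L ∧
      (∀ VN : ℕ → Finset V, RCM.MonoExhaust G VN → RCM.Folner G VN →
        Tendsto (fun N => ((RCM.edgesIn G (VN N)).card : ℝ) / (VN N).card)
          atTop (nhds L)) ∧
      ∀ (k : ℕ) (O : Fin k → Set V) (D : Fin k → ℕ) (α : Fin k → ℝ)
        (VN : ℕ → Finset V), RCM.MonoExhaust G VN → RCM.Folner G VN →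
        (∀ i, ∃ x : V, O i = {y | ∃ φ : G ≃g G, φ x = y}) →
        Function.Injective O →
        (∀ x : V, ∃ i, x ∈ O i) →
        (∀ i, ∀ x ∈ O i, (G.neighborSet x).ncard = D i) →
        (∀ i, Tendsto (fun N => ((O i ∩ (↑(VN N) : Set V)).ncard : ℝ) / (VN N).card)
          atTop (nhds (α i))) →
        L = (1 / 2) * ∑ i, α i * D i := by
  classical
  -- the orbit quotient is finite
  have hfinQ : Finite (EPV.Q G) := by
    obtain ⟨s, hs⟩ := hqt
    refine Finite.of_surjective (fun y : {y // y ∈ s} => EPV.cls G y.1) ?_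
    intro q
    obtain ⟨y, hy, φ, hφ⟩ := hs q.out
    refine ⟨⟨y, hy⟩, ?_⟩
    have h2 : EPV.cls G y = EPV.cls G q.out := by
      rw [← hφ, EPV.cls_iso]
    show EPV.cls G y = q
    rw [h2, EPV.cls_out]
  haveI := hfinQ
  letI : Fintype (EPV.Q G) := Fintype.ofFinite _
  -- degrees are positive
  have hdegpos : ∀ x : V, 0 < EPV.deg G hlf x := by
    intro x
    obtain ⟨y, hyx⟩ := exists_ne x
    obtain ⟨w⟩ := hconn.preconnected x y
    cases w with
    | nil => exact absurd rfl hyx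
    | cons h _ =>
        exact Finset.card_pos.2 ⟨_, (EPV.mem_nbr G hlf).2 h⟩
  have hdq1 : ∀ q : EPV.Q G, 1 ≤ EPV.dq G hlf q := fun q => hdegpos q.out
  -- a boundary-vanishing sequence from amenability
  have hseq : ∀ n : ℕ, ∃ W : Finset V, W.Nonempty ∧ EPV.bdr G hlf W < 1/((n:ℝ)+1) := by
    intro n
    obtain ⟨W, hWne, hWb⟩ := hamen (1/((n:ℝ)+1)) (by positivity)
    have hc : (0:ℝ) < W.card := by exact_mod_cast Finset.card_pos.2 hWne
    refine ⟨W, hWne, ?_⟩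
    rw [EPV.bdr, div_lt_iff₀ hc, ← EPV.bd_eq G hlf W]
    exact hWb
  choose WA hWAne hWAb using hseq
  have hWAb0 : Tendsto (fun n => EPV.bdr G hlf (WA n)) atTop (nhds 0) := by
    refine squeeze_zero (fun n => ?_) (fun n => le_of_lt (hWAb n))
      tendsto_one_div_add_atTop_nhds_zero_nat
    rw [EPV.bdr]; positivity
  obtain ⟨f, hf, -⟩ := EPV.exists_sol_subseq G hlf WA hWAne hWAb0
  have hfpos := EPV.sol_pos G hlf hconn f hf
  set L : ℝ := (1/2) * ∑ q : EPV.Q G, (EPV.dq G hlf q : ℝ) * f q with hL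
  have hLpos : 0 < L := by
    have h1 : (1:ℝ) ≤ ∑ q : EPV.Q G, (EPV.dq G hlf q : ℝ) * f q := by
      rw [← hf.2.1]
      refine Finset.sum_le_sum fun q _ => ?_
      have h2 : (1:ℝ) ≤ (EPV.dq G hlf q : ℝ) := by exact_mod_cast hdq1 q
      nlinarith [hf.1 q]
    rw [hL]; linarith
  -- main convergence
  have hmain : ∀ VN : ℕ → Finset V, RCM.MonoExhaust G VN → RCM.Folner G VN →
      Tendsto (fun N => ((RCM.edgesIn G (VN N)).card : ℝ) / (VN N).card)
        atTop (nhds L) := by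
    intro VN hME hF
    have hne : ∀ N, (VN N).Nonempty := by
      intro N
      obtain ⟨⟨x, hx⟩⟩ := (hME.1 N).nonempty
      exact ⟨x, by exact_mod_cast hx⟩
    have hb : Tendsto (fun N => EPV.bdr G hlf (VN N)) atTop (nhds 0) := by
      have heq : (fun N => EPV.bdr G hlf (VN N))
          = fun N => ((RCM.edgeBoundary G (VN N)).ncard : ℝ) / (VN N).card :=
        funext fun N => by rw [EPV.bdr, EPV.bd_eq]
      rw [heq]; exact hF
    have hvec := EPV.freq_tendsto G hlf hconn f hf VN hne hb
    have hcompw : ∀ q, Tendsto (fun N => EPV.vec G (VN N) q) atTop (nhds (f q)) :=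
      fun q => tendsto_pi_nhds.1 hvec q
    have h1 : Tendsto (fun N => ∑ q : EPV.Q G, (EPV.dq G hlf q : ℝ) * EPV.vec G (VN N) q)
        atTop (nhds (∑ q : EPV.Q G, (EPV.dq G hlf q : ℝ) * f q)) :=
      tendsto_finset_sum _ fun q _ => (hcompw q).const_mul _
    have h2 := (h1.sub hb).const_mul (1/2 : ℝ)
    rw [sub_zero] at h2
    refine Tendsto.congr (fun N => (EPV.edges_ratio G hlf (VN N) (hne N)).symm) ?_
    rw [hL]
    exact h2
  refine ⟨L, hLpos, hmain, ?_⟩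
  -- the orbit formula
  intro k O D α VN hME hF horb hinj hcov hdeg hα
  have hne : ∀ N, (VN N).Nonempty := by
    intro N
    obtain ⟨⟨x, hx⟩⟩ := (hME.1 N).nonempty
    exact ⟨x, by exact_mod_cast hx⟩
  have hb : Tendsto (fun N => EPV.bdr G hlf (VN N)) atTop (nhds 0) := by
    have heq : (fun N => EPV.bdr G hlf (VN N))
        = fun N => ((RCM.edgeBoundary G (VN N)).ncard : ℝ) / (VN N).card :=
      funext fun N => by rw [EPV.bdr, EPV.bd_eq]
    rw [heq]; exact hF
  -- the orbits as class sets
  have horb' : ∀ i, ∃ z : V, O i = {y | EPV.cls G y = EPV.cls G z} := by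
    intro i
    obtain ⟨z, hz⟩ := horb i
    refine ⟨z, ?_⟩
    rw [hz]
    ext y
    simp only [Set.mem_setOf_eq]
    constructor
    · intro h; exact ((EPV.cls_eq_iff G).2 h).symm
    · intro h; exact (EPV.cls_eq_iff G).1 h.symm
  have huniq : ∀ (x : V) (i j : Fin k), x ∈ O i → x ∈ O j → i = j := by
    intro x i j hxi hxj
    obtain ⟨z, hz⟩ := horb' i
    obtain ⟨w, hw⟩ := horb' j
    apply hinj
    rw [hz] at hxi ⊢
    rw [hw] at hxj ⊢
    rw [Set.mem_setOf_eq] at hxi hxj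
    ext y
    simp only [Set.mem_setOf_eq]
    rw [← hxi, ← hxj]
  choose ι hι using hcov
  have hfilter : ∀ (i : Fin k) (W : Finset V),
      W.filter (fun x => ι x = i) = W.filter (fun x => x ∈ O i) := by
    intro i W
    ext x
    simp only [Finset.mem_filter, and_congr_right_iff]
    intro _
    constructor
    · rintro rfl; exact hι x
    · intro hx; exact huniq x (ι x) i (hι x) hx
  have hfib : ∀ (i : Fin k) (W : Finset V),
      (O i ∩ (↑W : Set V)).ncard = (W.filter (fun x => ι x = i)).card := by
    intro i W
    rw [hfilter]
    have : O i ∩ (↑W : Set V) = ↑(W.filter (fun x => x ∈ O i)) := by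
      ext x
      simp only [Set.mem_inter_iff, Finset.coe_filter, Set.mem_setOf_eq, Finset.mem_coe]
      tauto
    rw [this, Set.ncard_coe_finset]
  have hsumdeg : ∀ W : Finset V, ∑ x ∈ W, EPV.deg G hlf x
      = ∑ i : Fin k, D i * (W.filter (fun x => ι x = i)).card := by
    intro W
    rw [← Finset.sum_fiberwise W ι (EPV.deg G hlf)]
    refine Finset.sum_congr rfl fun i _ => ?_
    rw [Finset.sum_congr rfl (g := fun _ => D i), Finset.sum_const, smul_eq_mul, mul_comm]
    intro x hx
    have hxi : x ∈ O i := (Finset.mem_filter.1 hx).2 ▸ hι x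
    rw [EPV.deg_eq_ncard]
    exact hdeg i x hxi
  -- convergence of the degree average
  have hT1 : Tendsto (fun N => ∑ i : Fin k,
      (D i : ℝ) * (((O i ∩ (↑(VN N) : Set V)).ncard : ℝ) / (VN N).card))
      atTop (nhds (∑ i : Fin k, (D i : ℝ) * α i)) :=
    tendsto_finset_sum _ fun i _ => (hα i).const_mul _
  have hT2 := (hT1.sub hb).const_mul (1/2 : ℝ)
  rw [sub_zero] at hT2
  have heq2 : ∀ N, ((RCM.edgesIn G (VN N)).card : ℝ) / (VN N).card
      = (1/2) * ((∑ i : Fin k,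
          (D i : ℝ) * (((O i ∩ (↑(VN N) : Set V)).ncard : ℝ) / (VN N).card))
        - EPV.bdr G hlf (VN N)) := by
    intro N
    rw [EPV.edges_ratio' G hlf (VN N) (hne N)]
    congr 2
    rw [hsumdeg]
    push_cast
    rw [Finset.sum_div]
    refine Finset.sum_congr rfl fun i _ => ?_
    rw [hfib i (VN N)]
    push_cast
    rw [mul_div_assoc]
  have hT3 : Tendsto (fun N => ((RCM.edgesIn G (VN N)).card : ℝ) / (VN N).card)
      atTop (nhds ((1/2) * ∑ i : Fin k, (D i : ℝ) * α i)) :=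
    Tendsto.congr (fun N => (heq2 N).symm) hT2
  have := tendsto_nhds_unique (hmain VN hME hF) hT3
  rw [this]
  congr 1
  exact Finset.sum_congr rfl fun i _ => mul_comm _ _
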